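/- For all α, β ∈ ℂ and all x, y ∈ ℝ, ξ_α((x+y)/√2) · ξ_β((x-y)/√2) = ξ_{(α+β)/√2}(x) · ξ_{(α-β)/√2}(y). -/

import Mathlib

open MeasureTheory

noncomputable section

/-- The coherent state wavefunction
`ξ_α(u) = π^{-1/4} e^{-|α|²/2} exp(-(u² - 2√2 α u + α²)/2)`. -/
def xi (α : ℂ) (u : ℝ) : ℂ :=
  ((Real.pi ^ (-(1/4 : ℝ)) : ℝ) : ℂ) * Complex.exp (-((‖α‖ ^ 2 : ℝ) : ℂ) / 2) *
    Complex.exp (-((u : ℂ) ^ 2 - 2 * (Real.sqrt 2 : ℂ) * α * (u : ℂ) + α ^ 2) / 2)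

/-- `ξ_α((x+y)/√2) ξ_β((x-y)/√2) = ξ_{(α+β)/√2}(x) ξ_{(α-β)/√2}(y)`. -/
theorem coherent_product_rotation (α β : ℂ) (x y : ℝ) :
    xi α ((x + y) / Real.sqrt 2) * xi β ((x - y) / Real.sqrt 2)
      = xi ((α + β) / (Real.sqrt 2 : ℂ)) x * xi ((α - β) / (Real.sqrt 2 : ℂ)) y := by
  have hs : ((Real.sqrt 2 : ℝ) : ℂ) ^ 2 = 2 := by
    norm_cast
    rw [Real.sq_sqrt] <;> norm_num
  have hne : ((Real.sqrt 2 : ℝ) : ℂ) ≠ 0 := by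
    intro h
    rw [h] at hs; norm_num at hs
  have habs : (‖(α + β) / (Real.sqrt 2 : ℂ)‖ ^ 2 : ℝ)
      + ‖(α - β) / (Real.sqrt 2 : ℂ)‖ ^ 2
      = ‖α‖ ^ 2 + ‖β‖ ^ 2 := by
    simp only [map_div₀, norm_div, div_pow, Complex.sq_norm, Complex.normSq_add, Complex.normSq_sub,
      Complex.normSq_ofReal]
    have : Real.sqrt 2 * Real.sqrt 2 = 2 := Real.mul_self_sqrt (by norm_num)
    rw [this]
    ring
  have habsC : ((‖(α + β) / (Real.sqrt 2 : ℂ)‖ ^ 2 : ℝ) : ℂ)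
      + ((‖(α - β) / (Real.sqrt 2 : ℂ)‖ ^ 2 : ℝ) : ℂ)
      = ((‖α‖ ^ 2 : ℝ) : ℂ) + ((‖β‖ ^ 2 : ℝ) : ℂ) := by
    exact_mod_cast congrArg (Complex.ofReal) habs
  have hpoly : ((((x + y) / Real.sqrt 2 : ℝ) : ℂ) ^ 2
        - 2 * ((Real.sqrt 2 : ℝ) : ℂ) * α * (((x + y) / Real.sqrt 2 : ℝ) : ℂ) + α ^ 2)
      + ((((x - y) / Real.sqrt 2 : ℝ) : ℂ) ^ 2
        - 2 * ((Real.sqrt 2 : ℝ) : ℂ) * β * (((x - y) / Real.sqrt 2 : ℝ) : ℂ) + β ^ 2)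
      = (((x : ℝ) : ℂ) ^ 2 - 2 * ((Real.sqrt 2 : ℝ) : ℂ)
          * ((α + β) / ((Real.sqrt 2 : ℝ) : ℂ)) * ((x : ℝ) : ℂ)
          + ((α + β) / ((Real.sqrt 2 : ℝ) : ℂ)) ^ 2)
      + (((y : ℝ) : ℂ) ^ 2 - 2 * ((Real.sqrt 2 : ℝ) : ℂ)
          * ((α - β) / ((Real.sqrt 2 : ℝ) : ℂ)) * ((y : ℝ) : ℂ)
          + ((α - β) / ((Real.sqrt 2 : ℝ) : ℂ)) ^ 2) := by
    push_cast
    field_simp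
    ring_nf
    linear_combination (α^2 + β^2 - (x:ℂ)^2 - (y:ℂ)^2) * hs
  have key : ∀ (c : ℂ) {e1 e2 e3 e4 : ℂ}, e1 + e2 = e3 + e4 →
      c * (Complex.exp e1 * (c * Complex.exp e2))
        = c * (Complex.exp e3 * (c * Complex.exp e4)) := by
    intro c e1 e2 e3 e4 h
    have hE : Complex.exp e1 * Complex.exp e2 = Complex.exp e3 * Complex.exp e4 := by
      rw [← Complex.exp_add, ← Complex.exp_add, h]
    rw [mul_left_comm (Complex.exp e1), mul_left_comm (Complex.exp e3), ← mul_assoc,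
      ← mul_assoc, mul_assoc, mul_assoc, hE]
  simp only [xi, mul_assoc, ← Complex.exp_add]
  apply key
  linear_combination habsC / 2 - hpoly / 2
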